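/- arXiv:1512.04083 — 8 statements merged into one kernel-verified Lean document; each statement's English description precedes it below -/
import Mathlib

section
/- Let C be a category and B a class of morphisms of C. Then the class A = ᵇ⧄B of morphisms having the left lifting property with respect to every member of B is closed under transfinite composition: for any ordinal λ and any cocontinuous functor X : [0,λ] → C such that each successor map X_{β,β+1} lies in A, the composite X_{0,λ} lies in A. -/
open CategoryTheory

universe v u

section AuxLLP

variable {C : Type u} [Category.{v} C] {l : Ordinal.{0}} (F : Set.Iic l ⥤ C)
  {X Y : C} (p : X ⟶ Y) (f : F.obj ⟨0, (zero_le : (0 : Ordinal.{0}) ≤ l)⟩ ⟶ X)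
  (g : F.obj ⟨l, le_refl l⟩ ⟶ Y)

/-- A partial lift on the interval `[0, β]`. -/
structure PartialLiftLLP where
  β : Ordinal.{0}
  hβ : β ≤ l
  σ : ∀ γ (hγ : γ ≤ β), F.obj ⟨γ, hγ.trans hβ⟩ ⟶ X
  hσ0 : σ 0 ((zero_le : (0 : Ordinal.{0}) ≤ β)) = f
  hcomp : ∀ γ δ (hγδ : γ ≤ δ) (hδ : δ ≤ β),
    F.map (homOfLE (show (⟨γ, (hγδ.trans hδ).trans hβ⟩ : Set.Iic l) ≤ ⟨δ, hδ.trans hβ⟩ from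
      Subtype.mk_le_mk.mpr hγδ)) ≫ σ δ hδ = σ γ (hγδ.trans hδ)
  hp : ∀ γ (hγ : γ ≤ β), σ γ hγ ≫ p =
    F.map (homOfLE (show (⟨γ, hγ.trans hβ⟩ : Set.Iic l) ≤ ⟨l, le_refl l⟩ from
      Subtype.mk_le_mk.mpr (hγ.trans hβ))) ≫ g

instance : Preorder (PartialLiftLLP F p f g) where
  le a b := ∃ h : a.β ≤ b.β, ∀ γ (hγ : γ ≤ a.β), b.σ γ (hγ.trans h) = a.σ γ hγ
  le_refl a := ⟨le_refl _, fun _ _ => rfl⟩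
  le_trans a b c hab hbc := ⟨hab.1.trans hbc.1, fun γ hγ =>
    (hbc.2 γ (hγ.trans hab.1)).trans (hab.2 γ hγ)⟩

end AuxLLP

/-- The class of morphisms having the left lifting property with respect to every
member of a class `B` of morphisms is closed under transfinite composition:
given an ordinal `l` and a cocontinuous (`λ`-sequence) functor `F` from the interval
`[0, l]` to `C` such that each successor map `F_{β, β+1}` has the left lifting
property with respect to every member of `B`, the transfinite composite
`F_{0, l} : F 0 ⟶ F l` has the left lifting property with respect to every member of `B`. -/
theorem llp_closed_under_transfinite_composition
    {C : Type u} [Category.{v} C] (B : MorphismProperty C)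
    (l : Ordinal.{0}) (F : Set.Iic l ⥤ C)
    [Limits.PreservesColimitsOfSize.{1, 1} F]
    (hsucc : ∀ (β : Ordinal.{0}) (hβ : β < l) ⦃X Y : C⦄ (p : X ⟶ Y), B p →
      HasLiftingProperty
        (F.map (homOfLE (show (⟨β, hβ.le⟩ : Set.Iic l) ≤ ⟨Order.succ β, Order.succ_le_of_lt hβ⟩ from
          Subtype.mk_le_mk.mpr (Order.le_succ β)))) p) :
    ∀ ⦃X Y : C⦄ (p : X ⟶ Y), B p →
      HasLiftingProperty
        (F.map (homOfLE (show (⟨0, (zero_le : (0 : Ordinal.{0}) ≤ l)⟩ : Set.Iic l) ≤ ⟨l, le_refl l⟩ from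
          Subtype.mk_le_mk.mpr ((zero_le : (0 : Ordinal.{0}) ≤ l))))) p := by
  intro X Y p hB
  constructor
  intro f g sq
  -- the bottom partial lift, defined on `[0, 0]`
  have bot : PartialLiftLLP F p f g :=
    { β := 0
      hβ := (zero_le : (0 : Ordinal.{0}) ≤ l)
      σ := fun γ hγ => F.map (homOfLE (Subtype.mk_le_mk.mpr hγ)) ≫ f
      hσ0 := by
        beta_reduce
        exact (congrArg (fun t => t ≫ f) (F.map_id _)).trans (Category.id_comp f)
      hcomp := fun γ δ hγδ hδ => by
        beta_reduce
        rw [← Category.assoc, ← F.map_comp, homOfLE_comp]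
      hp := fun γ hγ => by
        beta_reduce
        rw [Category.assoc, sq.w, ← Category.assoc, ← F.map_comp, homOfLE_comp] }
  -- Zorn's lemma
  have hbound : ∀ c : Set (PartialLiftLLP F p f g), IsChain (· ≤ ·) c → BddAbove c := by
    intro c hc
    rcases Set.eq_empty_or_nonempty c with rfl | hne
    · exact ⟨bot, by simp [upperBounds]⟩
    by_cases hat : ∃ a ∈ c, ∀ b ∈ c, b.β ≤ a.β
    · obtain ⟨a, ha, hmax⟩ := hat
      refine ⟨a, fun b hb => ?_⟩
      rcases eq_or_ne b a with rfl | hba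
      · exact le_refl b
      · rcases hc hb ha hba with h | h
        · exact h
        · obtain ⟨h1, h2⟩ := h
          exact ⟨hmax b hb, fun γ hγ => (h2 γ (hγ.trans (hmax b hb))).symm⟩
    · push_neg at hat
      set s : Ordinal.{0} := sSup (PartialLiftLLP.β '' c) with hs_def
      have hbdd : BddAbove (PartialLiftLLP.β '' c) := ⟨l, by rintro _ ⟨a, -, rfl⟩; exact a.hβ⟩
      have hne' : (PartialLiftLLP.β '' c).Nonempty := hne.image _
      have hsl : s ≤ l := csSup_le hne' (by rintro _ ⟨a, -, rfl⟩; exact a.hβ)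
      have hlt_s : ∀ a ∈ c, a.β < s := by
        intro a ha
        obtain ⟨b, hb, hab⟩ := hat a ha
        exact hab.trans_le (le_csSup hbdd ⟨b, hb, rfl⟩)
      have hex : ∀ γ, γ < s → ∃ a, a ∈ c ∧ γ ≤ a.β := by
        intro γ hγ
        by_contra h
        push_neg at h
        have : s ≤ γ := csSup_le hne' (by rintro _ ⟨a, ha, rfl⟩; exact (h a ha).le)
        exact absurd hγ (not_lt.mpr this)
      let pick : ∀ γ, γ < s → PartialLiftLLP F p f g := fun γ hγ => (hex γ hγ).choose
      have pick_mem : ∀ γ hγ, pick γ hγ ∈ c := fun γ hγ => (hex γ hγ).choose_spec.1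
      have pick_le : ∀ γ hγ, γ ≤ (pick γ hγ).β := fun γ hγ => (hex γ hγ).choose_spec.2
      let σc : ∀ γ (hγ : γ < s), F.obj ⟨γ, (le_of_lt hγ).trans hsl⟩ ⟶ X := fun γ hγ =>
        (pick γ hγ).σ γ (pick_le γ hγ)
      have key : ∀ γ (hγs : γ < s) (a : PartialLiftLLP F p f g), a ∈ c → ∀ (hγ : γ ≤ a.β),
          σc γ hγs = a.σ γ hγ := by
        intro γ hγs a ha hγ
        rcases eq_or_ne a (pick γ hγs) with heq | hab
        · subst heq
          rfl
        · rcases hc ha (pick_mem γ hγs) hab with h | h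
          · exact h.2 γ hγ
          · exact (h.2 γ (pick_le γ hγs)).symm
      -- the colimit cocone at `s` in `Set.Iic l`
      have base : Limits.IsColimit (SmallObject.coconeOfLE (𝟭 (Set.Iic l)) hsl) :=
        { desc := fun t => homOfLE (by
            refine Subtype.mk_le_mk.mpr (csSup_le hne' ?_)
            rintro _ ⟨a, ha, rfl⟩
            exact (leOfHom (t.ι.app ⟨a.β, hlt_s a ha⟩) : _))
          fac := fun t j => Subsingleton.elim _ _
          uniq := fun t j _ => Subsingleton.elim _ _ }
      have hcolim := Limits.isColimitOfPreserves F base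
      -- a cocone on the restricted diagram with point `X`
      let myCocone : Limits.Cocone
          ((SmallObject.restrictionLT (𝟭 (Set.Iic l)) hsl) ⋙ F) :=
        { pt := X
          ι :=
            { app := fun γ => σc γ.1 γ.2
              naturality := fun γ δ φ => by
                obtain ⟨γ, hγ⟩ := γ
                obtain ⟨δ, hδ⟩ := δ
                have hγδ : γ ≤ δ := leOfHom φ
                simp only [Functor.const_obj_map, Category.comp_id]
                exact (((pick δ hδ).hcomp γ δ hγδ (pick_le δ hδ)).trans
                  (key γ hγ (pick δ hδ) (pick_mem δ hδ) (hγδ.trans (pick_le δ hδ))).symm).trans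
                  (Category.comp_id _).symm } }
      let σs : F.obj ⟨s, hsl⟩ ⟶ X := hcolim.desc myCocone
      have fac : ∀ γ (hγ : γ < s),
          F.map (homOfLE (show (⟨γ, (le_of_lt hγ).trans hsl⟩ : Set.Iic l) ≤ ⟨s, hsl⟩ from
            Subtype.mk_le_mk.mpr hγ.le)) ≫ σs = σc γ hγ :=
        fun γ hγ => hcolim.fac myCocone ⟨γ, hγ⟩
      have hps : σs ≫ p = F.map (homOfLE (show (⟨s, hsl⟩ : Set.Iic l) ≤ ⟨l, le_refl l⟩ from
          Subtype.mk_le_mk.mpr hsl)) ≫ g := by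
        apply hcolim.hom_ext
        rintro ⟨γ, hγ⟩
        refine ((Category.assoc _ _ _).symm.trans ?_)
        refine (congrArg (fun t => t ≫ p) (fac γ hγ)).trans ?_
        refine ((pick γ hγ).hp γ (pick_le γ hγ)).trans ?_
        show F.map (homOfLE (show (⟨γ, (le_of_lt hγ).trans hsl⟩ : Set.Iic l) ≤ ⟨l, le_refl l⟩ from
            Subtype.mk_le_mk.mpr ((le_of_lt hγ).trans hsl))) ≫ g =
          F.map (homOfLE (show (⟨γ, (le_of_lt hγ).trans hsl⟩ : Set.Iic l) ≤ ⟨s, hsl⟩ from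
            Subtype.mk_le_mk.mpr (le_of_lt hγ))) ≫
           F.map (homOfLE (show (⟨s, hsl⟩ : Set.Iic l) ≤ ⟨l, le_refl l⟩ from
            Subtype.mk_le_mk.mpr hsl)) ≫ g
        rw [← Category.assoc, ← F.map_comp, homOfLE_comp]
      refine ⟨{ β := s
                hβ := hsl
                σ := fun γ hγ => F.map (homOfLE (Subtype.mk_le_mk.mpr hγ)) ≫ σs
                hσ0 := ?_
                hcomp := fun γ δ hγδ hδ => by
                  beta_reduce
                  rw [← Category.assoc, ← F.map_comp, homOfLE_comp]
                hp := fun γ hγ => by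
                  beta_reduce
                  rw [Category.assoc, hps, ← Category.assoc, ← F.map_comp, homOfLE_comp] }, ?_⟩
      · obtain ⟨a, ha⟩ := hne
        have h0s : (0 : Ordinal) < s := ((zero_le : (0 : Ordinal.{0}) ≤ a.β)).trans_lt (hlt_s a ha)
        exact (fac 0 h0s).trans ((key 0 h0s a ha ((zero_le : (0 : Ordinal.{0}) ≤ a.β))).trans a.hσ0)
      · intro b hb
        exact ⟨(hlt_s b hb).le, fun γ hγ =>
          (fac γ (hγ.trans_lt (hlt_s b hb))).trans (key γ (hγ.trans_lt (hlt_s b hb)) b hb hγ)⟩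

  obtain ⟨m, hm⟩ := zorn_le (α := PartialLiftLLP F p f g) hbound
  have hml : m.β = l := by
    by_contra h
    have hlt : m.β < l := lt_of_le_of_ne m.hβ h
    haveI : HasLiftingProperty
        (F.map (homOfLE (show (⟨m.β, hlt.le⟩ : Set.Iic l) ≤
          ⟨Order.succ m.β, Order.succ_le_of_lt hlt⟩ from
          Subtype.mk_le_mk.mpr (Order.le_succ m.β)))) p := hsucc m.β hlt p hB
    have sq' : CommSq (m.σ m.β le_rfl)
        (F.map (homOfLE (show (⟨m.β, hlt.le⟩ : Set.Iic l) ≤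
          ⟨Order.succ m.β, Order.succ_le_of_lt hlt⟩ from
          Subtype.mk_le_mk.mpr (Order.le_succ m.β)))) p
        (F.map (homOfLE (show (⟨Order.succ m.β, Order.succ_le_of_lt hlt⟩ : Set.Iic l) ≤
          ⟨l, le_refl l⟩ from Subtype.mk_le_mk.mpr (Order.succ_le_of_lt hlt))) ≫ g) :=
      ⟨(m.hp m.β le_rfl).trans (by rw [← Category.assoc, ← F.map_comp, homOfLE_comp])⟩
    let new : PartialLiftLLP F p f g :=
      { β := Order.succ m.β
        hβ := Order.succ_le_of_lt hlt
        σ := fun γ hγ => F.map (homOfLE (Subtype.mk_le_mk.mpr hγ)) ≫ sq'.lift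
        hσ0 := by
          beta_reduce
          have e1 : F.map (homOfLE (show (⟨(0 : Ordinal), (zero_le : (0 : Ordinal.{0}) ≤ l)⟩ : Set.Iic l) ≤
              ⟨Order.succ m.β, Order.succ_le_of_lt hlt⟩ from
              Subtype.mk_le_mk.mpr ((zero_le : (0 : Ordinal.{0}) ≤ _)))) ≫ sq'.lift =
              F.map (homOfLE (show (⟨(0 : Ordinal), (zero_le : (0 : Ordinal.{0}) ≤ l)⟩ : Set.Iic l) ≤
                ⟨m.β, hlt.le⟩ from Subtype.mk_le_mk.mpr ((zero_le : (0 : Ordinal.{0}) ≤ m.β)))) ≫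
              F.map (homOfLE (show (⟨m.β, hlt.le⟩ : Set.Iic l) ≤
                ⟨Order.succ m.β, Order.succ_le_of_lt hlt⟩ from
                Subtype.mk_le_mk.mpr (Order.le_succ m.β))) ≫ sq'.lift := by
            rw [← Category.assoc, ← F.map_comp, homOfLE_comp]
          refine e1.trans ?_
          rw [sq'.fac_left]
          exact (m.hcomp 0 m.β ((zero_le : (0 : Ordinal.{0}) ≤ m.β)) le_rfl).trans m.hσ0
        hcomp := fun γ δ hγδ hδ => by
          beta_reduce
          rw [← Category.assoc, ← F.map_comp, homOfLE_comp]
        hp := fun γ hγ => by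
          beta_reduce
          rw [Category.assoc, sq'.fac_right, ← Category.assoc, ← F.map_comp, homOfLE_comp] }
    have hle : m ≤ new := by
      refine ⟨Order.le_succ m.β, fun γ hγ => ?_⟩
      show F.map (homOfLE (show (⟨γ, (hγ.trans (Order.le_succ m.β)).trans
          (Order.succ_le_of_lt hlt)⟩ : Set.Iic l) ≤
          ⟨Order.succ m.β, Order.succ_le_of_lt hlt⟩ from
          Subtype.mk_le_mk.mpr (hγ.trans (Order.le_succ m.β)))) ≫ sq'.lift = m.σ γ hγ
      have e1 : F.map (homOfLE (show (⟨γ, (hγ.trans (Order.le_succ m.β)).trans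
          (Order.succ_le_of_lt hlt)⟩ : Set.Iic l) ≤
          ⟨Order.succ m.β, Order.succ_le_of_lt hlt⟩ from
          Subtype.mk_le_mk.mpr (hγ.trans (Order.le_succ m.β)))) ≫ sq'.lift =
          F.map (homOfLE (show (⟨γ, hγ.trans m.hβ⟩ : Set.Iic l) ≤ ⟨m.β, hlt.le⟩ from
            Subtype.mk_le_mk.mpr hγ)) ≫
          F.map (homOfLE (show (⟨m.β, hlt.le⟩ : Set.Iic l) ≤
            ⟨Order.succ m.β, Order.succ_le_of_lt hlt⟩ from
            Subtype.mk_le_mk.mpr (Order.le_succ m.β))) ≫ sq'.lift := by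
        rw [← Category.assoc, ← F.map_comp, homOfLE_comp]
      refine e1.trans ?_
      rw [sq'.fac_left]
      exact m.hcomp γ m.β hγ le_rfl
    have h1 : Order.succ m.β ≤ m.β := (hm hle).1
    exact (Order.lt_succ m.β).not_ge h1
  -- conclude: the maximal partial lift gives the desired diagonal
  exact ⟨⟨{ l := m.σ l hml.ge
            fac_left := (m.hcomp 0 l ((zero_le : (0 : Ordinal.{0}) ≤ l)) hml.ge).trans m.hσ0
            fac_right := (m.hp l hml.ge).trans
              ((congrArg (fun t => t ≫ g) (F.map_id _)).trans (Category.id_comp g)) }⟩⟩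
end

section
/- In a model category, a retract of a weak equivalence is a weak equivalence. -/
open CategoryTheory

universe v u

/-- A model structure on a category `C`: classes `W` (weak equivalences), `Fib`
(fibrations) and `Cof` (cofibrations) such that `(Cof, Fib ∩ W)` and
`(Cof ∩ W, Fib)` are weak factorization systems and `W` satisfies 2-out-of-3. -/
structure ModelStructure (C : Type u) [Category.{v} C] where
  W : MorphismProperty C
  Fib : MorphismProperty C
  Cof : MorphismProperty C
  cof_iff : ∀ {X Y : C} (f : X ⟶ Y),
    Cof f ↔ ∀ ⦃A B : C⦄ (p : A ⟶ B), Fib p → W p → HasLiftingProperty f p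
  trivFib_iff : ∀ {X Y : C} (f : X ⟶ Y),
    (Fib f ∧ W f) ↔ ∀ ⦃A B : C⦄ (i : A ⟶ B), Cof i → HasLiftingProperty i f
  trivCof_iff : ∀ {X Y : C} (f : X ⟶ Y),
    (Cof f ∧ W f) ↔ ∀ ⦃A B : C⦄ (p : A ⟶ B), Fib p → HasLiftingProperty f p
  fib_iff : ∀ {X Y : C} (f : X ⟶ Y),
    Fib f ↔ ∀ ⦃A B : C⦄ (i : A ⟶ B), Cof i → W i → HasLiftingProperty i f
  fact_cof_trivFib : ∀ {X Y : C} (f : X ⟶ Y),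
    ∃ (Z : C) (i : X ⟶ Z) (p : Z ⟶ Y), Cof i ∧ Fib p ∧ W p ∧ i ≫ p = f
  fact_trivCof_fib : ∀ {X Y : C} (f : X ⟶ Y),
    ∃ (Z : C) (i : X ⟶ Z) (p : Z ⟶ Y), Cof i ∧ W i ∧ Fib p ∧ i ≫ p = f
  weq_comp : ∀ {X Y Z : C} (f : X ⟶ Y) (g : Y ⟶ Z), W f → W g → W (f ≫ g)
  weq_of_comp_left : ∀ {X Y Z : C} (f : X ⟶ Y) (g : Y ⟶ Z), W f → W (f ≫ g) → W g
  weq_of_comp_right : ∀ {X Y Z : C} (f : X ⟶ Y) (g : Y ⟶ Z), W g → W (f ≫ g) → W f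

/-- A retract diagram in the arrow category: `f` is a retract of `g`. -/
structure ArrowRetract {C : Type u} [Category.{v} C] {X X' Y Y' : C}
    (f : X ⟶ X') (g : Y ⟶ Y') where
  r : X ⟶ Y
  r' : X' ⟶ Y'
  s : Y ⟶ X
  s' : Y' ⟶ X'
  retract_top : r ≫ s = 𝟙 X
  retract_bot : r' ≫ s' = 𝟙 X'
  square_left : r ≫ g = f ≫ r'
  square_right : s ≫ f = g ≫ s'

/-- A fibration that is a retract of a weak equivalence is a weak equivalence. -/
lemma fib_retract_weq {C : Type u} [Category.{v} C]
    (M : ModelStructure C) {X X' Y Y' : C} (f : X ⟶ X') (g : Y ⟶ Y')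
    (h : ArrowRetract f g) (hg : M.W g) (hf : M.Fib f) : M.W f := by
  obtain ⟨Z, j, q, hjC, hjW, hqF, hfact⟩ := M.fact_trivCof_fib g
  have hqW : M.W q := M.weq_of_comp_left j q hjW (by rw [hfact]; exact hg)
  -- lift in the square (s, j, f, q ≫ s')
  have hjf : HasLiftingProperty j f := (M.trivCof_iff j).mp ⟨hjC, hjW⟩ f hf
  have sq1 : CommSq h.s j f (q ≫ h.s') := ⟨by
    rw [← Category.assoc, hfact, h.square_right]⟩
  obtain ⟨⟨⟨t, ht1, ht2⟩⟩⟩ := hjf.sq_hasLift sq1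
  -- f is a retract of the trivial fibration q, hence a trivial fibration
  have : M.Fib f ∧ M.W f := by
    refine (M.trivFib_iff f).mpr ?_
    intro A B c hc
    have hcq : HasLiftingProperty c q := (M.trivFib_iff q).mp ⟨hqF, hqW⟩ c hc
    constructor
    intro a b sq
    have sq2 : CommSq (a ≫ h.r ≫ j) c q (b ≫ h.r') := ⟨by
      slice_lhs 3 4 => rw [hfact]
      slice_lhs 2 3 => rw [h.square_left]
      slice_lhs 1 2 => rw [sq.w]
      simp⟩
    obtain ⟨⟨⟨L, hL1, hL2⟩⟩⟩ := hcq.sq_hasLift sq2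
    refine ⟨⟨⟨L ≫ t, ?_, ?_⟩⟩⟩
    · rw [← Category.assoc, hL1]
      slice_lhs 3 4 => rw [ht1]
      slice_lhs 2 3 => rw [h.retract_top]
      simp
    · rw [Category.assoc, ht2, ← Category.assoc, hL2, Category.assoc,
        h.retract_bot, Category.comp_id]
  exact this.2

/-- In a model category, a retract of a weak equivalence is a weak equivalence. -/
theorem retract_of_weakEquivalence_is_weakEquivalence
    {C : Type u} [Category.{v} C] [Limits.HasLimits C] [Limits.HasColimits C]
    (M : ModelStructure C) {X X' Y Y' : C} (f : X ⟶ X') (g : Y ⟶ Y')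
    (h : ArrowRetract f g) (hg : M.W g) : M.W f := by
  obtain ⟨Z, i, p, hiC, hiW, hpF, hfact⟩ := M.fact_trivCof_fib f
  -- pushout of i along h.r
  let P := Limits.pushout i h.r
  let k : Z ⟶ P := Limits.pushout.inl i h.r
  let j : Y ⟶ P := Limits.pushout.inr i h.r
  have hcond : i ≫ k = h.r ≫ j := Limits.pushout.condition
  -- u : P ⟶ Y'
  have hu1 : i ≫ p ≫ h.r' = h.r ≫ g := by
    rw [← Category.assoc, hfact, h.square_left]
  let u : P ⟶ Y' := Limits.pushout.desc (p ≫ h.r') g hu1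
  have hku : k ≫ u = p ≫ h.r' := Limits.pushout.inl_desc _ _ _
  have hju : j ≫ u = g := Limits.pushout.inr_desc _ _ _
  -- v : P ⟶ Z
  have hv1 : i ≫ 𝟙 Z = h.r ≫ (h.s ≫ i) := by
    rw [Category.comp_id, ← Category.assoc, h.retract_top, Category.id_comp]
  let v : P ⟶ Z := Limits.pushout.desc (𝟙 Z) (h.s ≫ i) hv1
  have hkv : k ≫ v = 𝟙 Z := Limits.pushout.inl_desc _ _ _
  have hjv : j ≫ v = h.s ≫ i := Limits.pushout.inr_desc _ _ _
  -- j is a trivial cofibration (pushout of the trivial cofibration i)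
  have hj : M.Cof j ∧ M.W j := by
    refine (M.trivCof_iff j).mpr ?_
    intro A B q hq
    have hiq : HasLiftingProperty i q := (M.trivCof_iff i).mp ⟨hiC, hiW⟩ q hq
    constructor
    intro a b sq
    have sq2 : CommSq (h.r ≫ a) i q (k ≫ b) := ⟨by
      rw [Category.assoc, sq.w, ← Category.assoc, ← Category.assoc, hcond]⟩
    obtain ⟨⟨⟨l, hl1, hl2⟩⟩⟩ := hiq.sq_hasLift sq2
    refine ⟨⟨⟨Limits.pushout.desc l a hl1, Limits.pushout.inr_desc _ _ _, ?_⟩⟩⟩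
    apply Limits.pushout.hom_ext
    · rw [← Category.assoc, Limits.pushout.inl_desc, hl2]
    · rw [← Category.assoc, Limits.pushout.inr_desc, sq.w]
  -- u is a weak equivalence
  have huW : M.W u := M.weq_of_comp_left j u hj.2 (by rw [hju]; exact hg)
  -- p is a retract of u
  have hret : ArrowRetract p u :=
    { r := k, r' := h.r', s := v, s' := h.s'
      retract_top := hkv
      retract_bot := h.retract_bot
      square_left := by rw [hku]
      square_right := by
        apply Limits.pushout.hom_ext
        · rw [← Category.assoc, hkv, Category.id_comp, ← Category.assoc, hku,
            Category.assoc, h.retract_bot, Category.comp_id]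
        · rw [← Category.assoc, hjv, Category.assoc, hfact, h.square_right,
            ← Category.assoc, hju] }
  have hpW : M.W p := fib_retract_weq M p u hret huW hpF
  rw [← hfact]
  exact M.weq_comp i p hiW hpW
end

section
/- In the category of groupoids with the natural model structure, the pullback of a trivial cofibration (an injective-on-objects equivalence of groupoids) along an isofibration is again a trivial cofibration. -/
open CategoryTheory

universe v₁ u₁ v₂ u₂ v₃ u₃

variable {A : Type u₁} {B : Type u₂} {C : Type u₃}
variable [Groupoid A] [Groupoid B] [Groupoid C]

/-- An object of the strict pullback `A ×_B C` of `g : A ⥤ B` and `f : C ⥤ B`. -/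
structure PullbackObj (g : A ⥤ B) (f : C ⥤ B) where
  a : A
  c : C
  h : g.obj a = f.obj c

/-- A morphism of the strict pullback `A ×_B C`. -/
@[ext]
structure PullbackHom {g : A ⥤ B} {f : C ⥤ B} (x y : PullbackObj g f) where
  u : x.a ⟶ y.a
  v : x.c ⟶ y.c
  w : g.map u ≫ eqToHom y.h = eqToHom x.h ≫ f.map v

instance (g : A ⥤ B) (f : C ⥤ B) : Category (PullbackObj g f) where
  Hom := PullbackHom
  id x := ⟨𝟙 _, 𝟙 _, by simp⟩
  comp m n := ⟨m.u ≫ n.u, m.v ≫ n.v, by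
    rw [Functor.map_comp, Functor.map_comp, Category.assoc, n.w, ← Category.assoc, m.w,
      Category.assoc]⟩

/-- The projection `A ×_B C ⥤ A`. -/
def pullbackFst (g : A ⥤ B) (f : C ⥤ B) : PullbackObj g f ⥤ A where
  obj x := x.a
  map m := m.u

/-- A functor between groupoids is an isofibration if every (iso)morphism of the
codomain with a specified lift of its domain lifts to a morphism of the domain. -/
def IsIsofibration (F : A ⥤ B) : Prop :=
  ∀ (x : A) ⦃y : B⦄ (h : F.obj x ⟶ y),
    ∃ (x' : A) (e : F.obj x' = y) (m : x ⟶ x'), F.map m ≫ eqToHom e = h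

/-- In the natural model structure on groupoids, the pullback of a trivial
cofibration (an injective-on-objects equivalence of groupoids) along an
isofibration is again a trivial cofibration. -/
theorem pullback_trivialCofibration_along_isofibration
    (g : A ⥤ B) (f : C ⥤ B) (hg : IsIsofibration g)
    (hinj : Function.Injective f.obj) (hf : f.IsEquivalence) :
    Function.Injective (pullbackFst g f).obj ∧ (pullbackFst g f).IsEquivalence := by

  constructor
  · rintro ⟨a₁, c₁, h₁⟩ ⟨a₂, c₂, h₂⟩ (ha : a₁ = a₂)
    obtain rfl : a₁ = a₂ := ha
    obtain rfl : c₁ = c₂ := hinj (h₁.symm.trans h₂)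
    rfl
  · have hfull : (pullbackFst g f).Full := by
      constructor
      intro x y u
      have hff : f.FullyFaithful := Functor.FullyFaithful.ofFullyFaithful f
      refine ⟨⟨u, hff.preimage (eqToHom x.h.symm ≫ g.map u ≫ eqToHom y.h), ?_⟩, rfl⟩
      simp [Functor.FullyFaithful.map_preimage]
      rfl
    have hfaith : (pullbackFst g f).Faithful := by
      constructor
      intro x y m n h
      have hu : m.u = n.u := h
      have : f.map m.v = f.map n.v := by
        have wm := m.w
        have wn := n.w
        rw [hu, wn] at wm
        have h2 : eqToHom x.h ≫ f.map m.v = eqToHom x.h ≫ f.map n.v := wm.symm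
        simpa using congrArg (fun z => eqToHom x.h.symm ≫ z) h2
      exact PullbackHom.ext hu (f.map_injective this)
    have hess : (pullbackFst g f).EssSurj := by
      constructor
      intro a
      obtain ⟨c, ⟨e⟩⟩ := Functor.EssSurj.mem_essImage (F := f) (g.obj a)
      obtain ⟨a', ea, m, hm⟩ := hg a e.inv
      refine ⟨⟨a', c, ea⟩, ⟨?_⟩⟩
      exact Groupoid.isoEquivHom _ _ |>.symm m |>.symm
    exact { }
end

section
/- A functor between groupoids which is an isofibration (in particular, any functor between groupoids with all objects fibrant as target) pulls back equivalences: if g : A → B is an isofibration of groupoids and f : C → B is an equivalence of groupoids, then the projection A ×_B C → A is an equivalence of groupoids. -/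
open CategoryTheory

universe v₁ u₁ v₂ u₂ v₃ u₃

variable {A : Type u₁} {B : Type u₂} {C : Type u₃}
variable [Groupoid A] [Groupoid B] [Groupoid C]

/-- Isofibrations of groupoids pull back equivalences: if `g : A ⥤ B` is an
isofibration and `f : C ⥤ B` is an equivalence of groupoids, then the projection
`A ×_B C ⥤ A` is an equivalence of groupoids. -/
theorem pullback_equivalence_along_isofibration
    (g : A ⥤ B) (f : C ⥤ B) (hg : IsIsofibration g) (hf : f.IsEquivalence) :
    (pullbackFst g f).IsEquivalence := by
  have hfull : f.Full := hf.full
  have hfaith : f.Faithful := hf.faithful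
  have hsurj : f.EssSurj := hf.essSurj
  constructor
  · constructor
    intro x y m n hmn
    apply PullbackHom.ext hmn
    apply hfaith.map_injective
    have h1 := m.w
    have h2 := n.w
    simp only [pullbackFst] at hmn
    rw [hmn] at h1
    rw [h2] at h1
    exact ((Iso.cancel_iso_hom_left (eqToIso x.h) _ _).mp h1).symm
  · constructor
    intro x y u
    refine ⟨⟨u, f.preimage (eqToHom x.h.symm ≫ g.map u ≫ eqToHom y.h), ?_⟩, rfl⟩
    rw [f.map_preimage]
    simp
    rfl
  · constructor
    intro a
    obtain ⟨a', e', m, hm⟩ := hg a (f.objObjPreimageIso (g.obj a)).inv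
    refine ⟨⟨a', f.objPreimage (g.obj a), e'⟩, ⟨(asIso m).symm⟩⟩
end

section
/- In the category of groupoids with involution, the map from U to E sending each object A of the universe of small discrete groupoids-with-involution to the triple (A, A, id_A) is not surjective on fixed points of E. Concretely: there exist a κ-small set X (e.g. X = ℤ), viewed as the object A = (X, X, id_X) of U, and a bijection ρ : X → X with ρ ≠ id (e.g. n ↦ -n) such that (A, A, (ρ, ρ)) is a fixed point of E not in the image of the diagonal map. -/
/-- An object of the universe `U` of small discrete groupoids with involution:
a pair of (small) sets together with a bijection between them. -/
structure UObj : Type 1 where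
  A0 : Type
  A1 : Type
  e : A0 ≃ A1

/-- The involution `u` on `U`: `(A₀, A₁, φ) ↦ (A₁, A₀, φ⁻¹)`. -/
def uU (X : UObj) : UObj := ⟨X.A1, X.A0, X.e.symm⟩

/-- An object of the space of equivalences `E` over `U × U`: a pair of objects
`A, B` of `U` together with an isomorphism `ρ = (ρ₀, ρ₁) : A ≅ B` in `U`. -/
structure EObj : Type 1 where
  A : UObj
  B : UObj
  r0 : A.A0 ≃ B.A0
  r1 : A.A1 ≃ B.A1
  comm : ∀ a, B.e (r0 a) = r1 (A.e a)

/-- The involution on `E`: `(A, B, ρ) ↦ (u A, u B, u ρ)`. -/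
def uE (x : EObj) : EObj where
  A := uU x.A
  B := uU x.B
  r0 := x.r1
  r1 := x.r0
  comm := fun a => by
    have h := x.comm (x.A.e.symm a)
    replace h := h.trans (congrArg x.r1 (x.A.e.apply_symm_apply a))
    show x.B.e.symm (x.r1 a) = x.r0 (x.A.e.symm a)
    rw [← h, Equiv.symm_apply_apply]

/-- The diagonal map `U → E`, sending `A` to `(A, A, 1_A)`. -/
def diagE (X : UObj) : EObj := ⟨X, X, Equiv.refl _, Equiv.refl _, fun _ => rfl⟩

/-- The diagonal map `U → E` is not surjective onto the fixed points of `E`: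
there is a set `X` (e.g. `ℤ`), giving the object `A = (X, X, id)` of `U`, and a
bijection `ρ : X ≃ X` with `ρ ≠ id` (e.g. `n ↦ -n`) such that `(A, A, (ρ, ρ))` is
a fixed point of `E` not in the image of the diagonal. -/
theorem diag_not_surjective_on_fixed_points :
    ∃ (X : Type) (ρ : X ≃ X), ρ ≠ Equiv.refl X ∧
      (uE ⟨⟨X, X, Equiv.refl X⟩, ⟨X, X, Equiv.refl X⟩, ρ, ρ, fun _ => rfl⟩ =
        ⟨⟨X, X, Equiv.refl X⟩, ⟨X, X, Equiv.refl X⟩, ρ, ρ, fun _ => rfl⟩) ∧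
      ∀ A : UObj, diagE A ≠
        ⟨⟨X, X, Equiv.refl X⟩, ⟨X, X, Equiv.refl X⟩, ρ, ρ, fun _ => rfl⟩ := by
  refine ⟨ℤ, Equiv.neg ℤ, ?_, rfl, ?_⟩
  · intro h
    have := congrArg (fun e => e.toFun 1) h
    simp [Equiv.neg] at this
  · intro A h
    have hA : A = ⟨ℤ, ℤ, Equiv.refl ℤ⟩ := congrArg EObj.A h
    subst hA
    have : Equiv.refl ℤ = Equiv.neg ℤ := by injection h
    have := congrArg (fun e => e.toFun 1) this
    simp [Equiv.neg] at this
end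

section
/- Function extensionality fails for groupoids with involution in the following concrete sense: let S(𝟙) be the two-element discrete groupoid {0,1} with swap involution, S(I) the disjoint union of two copies of the interval groupoid with the swap involution, and f : S(I) → S(𝟙) the equivariant functor collapsing each interval. Then the set of equivariant sections s of f satisfying the fixed-point condition (that s commutes with the involutions) has at least two elements, even though the fixed-object sets of both S(I) and S(𝟙) are empty. -/
open CategoryTheory

/-- The interval groupoid: objects `Bool`, a unique isomorphism between any two
objects. -/
def IntervalGpd := Bool

instance : Groupoid IntervalGpd where
  Hom _ _ := PUnit
  id _ := ⟨⟩
  comp _ _ := ⟨⟩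
  inv _ := ⟨⟩

/-- `S(𝟙)`: the discrete groupoid on two objects. -/
abbrev SOne := Discrete Bool

/-- `S(I)`: the disjoint union of two copies of the interval groupoid; an object
is a pair (which copy, which endpoint). -/
abbrev SInt := Discrete Bool × IntervalGpd

/-- The swap involution on `S(𝟙)`. -/
def swapSOne : SOne ⥤ SOne := Discrete.functor (fun b => Discrete.mk (!b))

/-- The swap involution on `S(I)`, exchanging the two copies of the interval. -/
def swapSInt : SInt ⥤ SInt := swapSOne.prod (𝟭 IntervalGpd)

/-- The equivariant functor `f : S(I) → S(𝟙)` collapsing each interval. -/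
def collapse : SInt ⥤ SOne := CategoryTheory.Prod.fst _ _

instance (x y : SInt) : Subsingleton (x ⟶ y) := by
  constructor
  rintro ⟨⟨⟨⟩⟩, ⟨⟩⟩ ⟨⟨⟨⟩⟩, ⟨⟩⟩
  rfl

/-- Section picking endpoint `e` in each interval. -/
def sect (e : IntervalGpd) : SOne ⥤ SInt := Discrete.functor (fun b => (Discrete.mk b, e))

lemma sect_comp_collapse (e : IntervalGpd) : sect e ⋙ collapse = 𝟭 SOne := by
  fapply CategoryTheory.Functor.ext
  · rintro ⟨b⟩; rfl
  · rintro ⟨a⟩ ⟨b⟩ f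
    apply Subsingleton.elim

lemma sect_equivariant (e : IntervalGpd) : swapSOne ⋙ sect e = sect e ⋙ swapSInt := by
  fapply CategoryTheory.Functor.ext
  · rintro ⟨b⟩; rfl
  · rintro ⟨a⟩ ⟨b⟩ f
    apply Subsingleton.elim


/-- Failure of function extensionality, concretely: `S(I)` and `S(𝟙)` have no
fixed objects, yet the collapse map `f : S(I) → S(𝟙)` admits at least two
distinct equivariant sections. -/
theorem two_equivariant_sections_of_collapse :
    (∀ x : SInt, swapSInt.obj x ≠ x) ∧ (∀ x : SOne, swapSOne.obj x ≠ x) ∧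
    ∃ s₁ s₂ : SOne ⥤ SInt,
      s₁ ⋙ collapse = 𝟭 SOne ∧ s₂ ⋙ collapse = 𝟭 SOne ∧
      swapSOne ⋙ s₁ = s₁ ⋙ swapSInt ∧ swapSOne ⋙ s₂ = s₂ ⋙ swapSInt ∧
      s₁ ≠ s₂ := by
  refine ⟨?_, ?_, sect false, sect true, sect_comp_collapse _, sect_comp_collapse _,
    sect_equivariant _, sect_equivariant _, ?_⟩
  · rintro ⟨⟨b⟩, e⟩ h
    cases b <;> simp [swapSInt, swapSOne] at h
  · rintro ⟨b⟩ h
    cases b <;> simp [swapSOne] at h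
  · intro h
    have := congrArg (fun F : SOne ⥤ SInt => (F.obj ⟨false⟩).2) h
    simp [sect] at this
end

section
/- The interval groupoid with the flip involution, Ǐ (objects 0, 1, one isomorphism φ : 0 → 1, involution swapping 0 and 1 and sending φ to φ⁻¹), has no fixed objects, and consequently the unique equivariant functor from Ǐ to the terminal groupoid-with-identity-involution 𝟙! does not have the right lifting property with respect to the equivariant inclusion Ǐ ↪ ▽, where ▽ extends Ǐ by a fixed object 2 and an isomorphism ψ : 1 → 2 whose image under the involution is ψ ∘ φ. -/
open CategoryTheory

/-- The interval groupoid `Ǐ`: objects `0, 1` (modelled by `Bool`), one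
isomorphism `φ : 0 → 1`. -/
def Iv := Bool

instance : Groupoid Iv where
  Hom _ _ := PUnit
  id _ := ⟨⟩
  comp _ _ := ⟨⟩
  inv _ := ⟨⟩

/-- `▽`: the contractible groupoid on three objects `0, 1, 2`, extending `Ǐ` by a
third object `2` and an isomorphism `ψ : 1 → 2`. -/
def Tri := Fin 3

instance : Groupoid Tri where
  Hom _ _ := PUnit
  id _ := ⟨⟩
  comp _ _ := ⟨⟩
  inv _ := ⟨⟩

/-- The flip involution on `Ǐ`, swapping `0` and `1` (and sending `φ` to `φ⁻¹`). -/
def invIv : Iv ⥤ Iv where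
  obj b := !b
  map _ := ⟨⟩

/-- The involution on `▽`, swapping `0` and `1` and fixing `2` (it sends `ψ` to
`ψ ∘ φ`). -/
def invTri : Tri ⥤ Tri where
  obj i := (![1, 0, 2] : Fin 3 → Fin 3) (show Fin 3 from i)
  map _ := ⟨⟩

/-- The equivariant inclusion `Ǐ ↪ ▽`. -/
def inclIvTri : Iv ⥤ Tri where
  obj b := bif (show Bool from b) then (1 : Fin 3) else (0 : Fin 3)
  map _ := ⟨⟩

/-- `Ǐ` has no fixed objects, and consequently the unique equivariant functor
`Ǐ → 𝟙!` does not have the right lifting property with respect to the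
equivariant inclusion `Ǐ ↪ ▽`: there is no equivariant retraction `j : ▽ ⥤ Ǐ`
of the inclusion (the square with the identity on top has no lift). -/
theorem no_equivariant_lift :
    (∀ x : Iv, invIv.obj x ≠ x) ∧
    ¬ ∃ j : Tri ⥤ Iv, invTri ⋙ j = j ⋙ invIv ∧ inclIvTri ⋙ j = 𝟭 Iv := by
  constructor
  · exact fun x => Bool.not_ne_self (show Bool from x)
  · rintro ⟨j, heq, -⟩
    have h := congrArg (fun F : Tri ⥤ Iv => F.obj ((2 : Fin 3) : Tri)) heq
    have : j.obj ((2 : Fin 3) : Tri) = !(j.obj ((2 : Fin 3) : Tri)) := by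
      exact h
    exact Bool.not_ne_self _ this.symm
end

section
/- Let G be a groupoid with involution η, and G' ⊆ G'' full subgroupoids stable under η with G' nonempty and Ob(G'') = Ob(G') ∪ {x, η(x)} for some object x with η(x) ≠ x and x ∉ G'. Suppose there is an object y of G' and an isomorphism c : y → x in G. Then G'' is the pushout, in the category of groupoids with involution, of the inclusion G' ← S(𝟙) along S(𝟙) ↪ S(I), where S(𝟙) = {0,1} with swap involution maps to {y, η(y)}, and S(I) (two disjoint intervals with swap involution) maps via 0 ↦ y, 1 ↦ η(y), 0' ↦ x, 1' ↦ η(x), φ ↦ c, ψ ↦ η(c). -/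
open CategoryTheory

universe v₁ u₁ v₂ u₂

variable {G : Type u₁} [Groupoid G]

/-- The involution induced on the full subgroupoid of a stable set of objects. -/
def restrictInv (η : G ⥤ G) (S : Set G) (hstab : ∀ z ∈ S, η.obj z ∈ S) :
    ObjectProperty.FullSubcategory (· ∈ S) ⥤ ObjectProperty.FullSubcategory (· ∈ S) where
  obj z := ⟨η.obj z.obj, hstab _ z.property⟩
  map f := ObjectProperty.homMk (η.map f.hom)
  map_id z := by ext; exact η.map_id z.obj
  map_comp f g := by ext; exact η.map_comp f.hom g.hom

/-- The inclusion of full subgroupoids induced by `S' ⊆ S''`. -/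
def inclSub {S' S'' : Set G} (hsub : S' ⊆ S'') :
    ObjectProperty.FullSubcategory (· ∈ S') ⥤ ObjectProperty.FullSubcategory (· ∈ S'') where
  obj z := ⟨z.obj, hsub z.property⟩
  map f := ObjectProperty.homMk f.hom

set_option linter.unusedSectionVars false

namespace PWCE

open Classical in
noncomputable example : True := trivial

/-- The "interval" morphisms in `S(I)`. -/
def φmor : ((Discrete.mk false, (false : Bool)) : SInt) ⟶ (Discrete.mk false, (true : Bool)) :=
  (𝟙 _, PUnit.unit)

def ψmor : ((Discrete.mk true, (false : Bool)) : SInt) ⟶ (Discrete.mk true, (true : Bool)) :=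
  (𝟙 _, PUnit.unit)

instance (X Y : SInt) : Subsingleton (X ⟶ Y) := by
  obtain ⟨a, b⟩ := X; obtain ⟨c, d⟩ := Y
  exact inferInstanceAs (Subsingleton ((a ⟶ c) × PUnit))

structure Setup (G : Type u₁) [Groupoid G] (H : Type u₂) [Groupoid H] where
  η : G ⥤ G
  hη : η ⋙ η = 𝟭 G
  S' : Set G
  S'' : Set G
  hstab' : ∀ z ∈ S', η.obj z ∈ S'
  hstab'' : ∀ z ∈ S'', η.obj z ∈ S''
  hsub : S' ⊆ S''
  x : G
  hxfix : η.obj x ≠ x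
  hxnot : x ∉ S'
  hS'' : S'' = S' ∪ {x, η.obj x}
  hxS'' : x ∈ S''
  hηxS'' : η.obj x ∈ S''
  y : G
  hy : y ∈ S'
  c : y ⟶ x
  θ : H ⥤ H
  hθ : θ ⋙ θ = 𝟭 H
  m : ObjectProperty.FullSubcategory (· ∈ S') ⥤ H
  hm : restrictInv η S' hstab' ⋙ m = m ⋙ θ
  n : SInt ⥤ H
  hn : swapSInt ⋙ n = n ⋙ θ
  hagree0 : m.obj ⟨y, hy⟩ = n.obj (Discrete.mk false, (false : Bool))
  hagree1 : m.obj ⟨η.obj y, hstab' y hy⟩ = n.obj (Discrete.mk true, (false : Bool))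

variable {H : Type u₂} [Groupoid H] (E : Setup G H)

lemma ηη (z : G) : E.η.obj (E.η.obj z) = z := Functor.congr_obj E.hη z

lemma ηηmap {a b : G} (f : a ⟶ b) :
    E.η.map (E.η.map f) = eqToHom (ηη E a) ≫ f ≫ eqToHom (ηη E b).symm := by
  have := Functor.congr_hom E.hη f
  simpa using this

lemma hηxnot : E.η.obj E.x ∉ E.S' := fun h => E.hxnot (by
  have := E.hstab' _ h; rwa [ηη] at this)

lemma tri {z : G} (hz : z ∈ E.S'') : z ∈ E.S' ∨ z = E.x ∨ z = E.η.obj E.x := by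
  rw [E.hS''] at hz
  have := by simpa using hz
  tauto

/-- eqToHom in a full subcategory vs eqToHom of underlying objects. -/
lemma sub_eqToHom {P : G → Prop} {a b : ObjectProperty.FullSubcategory P} (h : a = b) :
    (eqToHom h : a ⟶ b).hom = (eqToHom (congrArg ObjectProperty.FullSubcategory.obj h) : a.obj ⟶ b.obj) := by
  subst h; rfl

lemma sub_ext {P : G → Prop} {a b : ObjectProperty.FullSubcategory P} (h : a.obj = b.obj) : a = b := by
  cases a; cases b; cases h; rfl

open Classical in
noncomputable def pObj (z : G) : ObjectProperty.FullSubcategory (· ∈ E.S') :=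
  if h : z ∈ E.S' then ⟨z, h⟩ else if z = E.x then ⟨E.y, E.hy⟩
  else ⟨E.η.obj E.y, E.hstab' _ E.hy⟩

open Classical in
noncomputable def Jobj (z : G) : H :=
  if h : z ∈ E.S' then E.m.obj ⟨z, h⟩
  else if z = E.x then E.n.obj (Discrete.mk false, (true : Bool))
  else E.n.obj (Discrete.mk true, (true : Bool))

lemma pObj_pos {z : G} (h : z ∈ E.S') : pObj E z = ⟨z, h⟩ := dif_pos h
lemma pObj_x : pObj E E.x = ⟨E.y, E.hy⟩ := by
  rw [pObj, dif_neg E.hxnot, if_pos rfl]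
lemma pObj_ηx : pObj E (E.η.obj E.x) = ⟨E.η.obj E.y, E.hstab' _ E.hy⟩ := by
  rw [pObj, dif_neg (hηxnot E), if_neg E.hxfix]

lemma Jobj_pos {z : G} (h : z ∈ E.S') : Jobj E z = E.m.obj ⟨z, h⟩ := dif_pos h
lemma Jobj_x : Jobj E E.x = E.n.obj (Discrete.mk false, (true : Bool)) := by
  rw [Jobj, dif_neg E.hxnot, if_pos rfl]
lemma Jobj_ηx : Jobj E (E.η.obj E.x) = E.n.obj (Discrete.mk true, (true : Bool)) := by
  rw [Jobj, dif_neg (hηxnot E), if_neg E.hxfix]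


open Classical in
noncomputable def eMor (z : G) (hz : z ∈ E.S'') : (pObj E z).obj ⟶ z :=
  if h : z ∈ E.S' then eqToHom (by rw [pObj_pos E h])
  else if hx : z = E.x then
    eqToHom (show (pObj E z).obj = E.y by rw [hx, pObj_x]) ≫ E.c ≫ eqToHom hx.symm
  else
    eqToHom (show (pObj E z).obj = E.η.obj E.y by
      rw [((tri E hz).resolve_left h).resolve_left hx, pObj_ηx]) ≫ E.η.map E.c ≫
      eqToHom (((tri E hz).resolve_left h).resolve_left hx).symm

open Classical in
noncomputable def aMor (z : G) (hz : z ∈ E.S'') : E.m.obj (pObj E z) ⟶ Jobj E z :=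
  if h : z ∈ E.S' then eqToHom (by rw [pObj_pos E h, Jobj_pos E h])
  else if hx : z = E.x then
    eqToHom (show E.m.obj (pObj E z) = E.n.obj (Discrete.mk false, (false : Bool)) by
      rw [hx, pObj_x]; exact E.hagree0) ≫ E.n.map φmor ≫
      eqToHom (show E.n.obj (Discrete.mk false, (true : Bool)) = Jobj E z by rw [hx, Jobj_x])
  else
    eqToHom (show E.m.obj (pObj E z) = E.n.obj (Discrete.mk true, (false : Bool)) by
      rw [((tri E hz).resolve_left h).resolve_left hx, pObj_ηx]; exact E.hagree1) ≫
      E.n.map ψmor ≫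
      eqToHom (show E.n.obj (Discrete.mk true, (true : Bool)) = Jobj E z by
        rw [((tri E hz).resolve_left h).resolve_left hx, Jobj_ηx])

lemma eMor_pos {z : G} (h : z ∈ E.S') (hz : z ∈ E.S'') :
    eMor E z hz = eqToHom (by rw [pObj_pos E h]) := dif_pos h

lemma eMor_x (hz : E.x ∈ E.S'') :
    eMor E E.x hz = eqToHom (by rw [pObj_x]) ≫ E.c := by
  rw [eMor, dif_neg E.hxnot, dif_pos rfl]
  simp

lemma eMor_ηx (hz : E.η.obj E.x ∈ E.S'') :
    eMor E (E.η.obj E.x) hz = eqToHom (by rw [pObj_ηx]) ≫ E.η.map E.c := by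
  rw [eMor, dif_neg (hηxnot E), dif_neg E.hxfix]
  simp

lemma aMor_pos {z : G} (h : z ∈ E.S') (hz : z ∈ E.S'') :
    aMor E z hz = eqToHom (by rw [pObj_pos E h, Jobj_pos E h]) := dif_pos h

lemma aMor_x (hz : E.x ∈ E.S'') :
    aMor E E.x hz = eqToHom (by rw [pObj_x]; exact E.hagree0) ≫ E.n.map φmor ≫
      eqToHom (by rw [Jobj_x]) := by
  rw [aMor, dif_neg E.hxnot, dif_pos rfl]

lemma aMor_ηx (hz : E.η.obj E.x ∈ E.S'') :
    aMor E (E.η.obj E.x) hz = eqToHom (by rw [pObj_ηx]; exact E.hagree1) ≫ E.n.map ψmor ≫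
      eqToHom (by rw [Jobj_ηx]) := by
  rw [aMor, dif_neg (hηxnot E), dif_neg E.hxfix]

/-- Regard a `G`-morphism as a morphism of the full subcategory. -/
abbrev homOf {S : Set G} {p q : ObjectProperty.FullSubcategory (· ∈ S)} (f : p.obj ⟶ q.obj) : p ⟶ q := ObjectProperty.homMk f

/-- Regard a subcategory morphism as a `G`-morphism. -/
abbrev homTo {S : Set G} {p q : ObjectProperty.FullSubcategory (· ∈ S)} (f : p ⟶ q) : p.obj ⟶ q.obj := f.hom

lemma homTo_comp {S : Set G} {p q r : ObjectProperty.FullSubcategory (· ∈ S)} (f : p ⟶ q) (g : q ⟶ r) :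
    homTo (f ≫ g) = homTo f ≫ homTo g := rfl

lemma homTo_id {S : Set G} (p : ObjectProperty.FullSubcategory (· ∈ S)) : homTo (𝟙 p) = 𝟙 p.obj := rfl

lemma homOf_comp {S : Set G} {p q r : ObjectProperty.FullSubcategory (· ∈ S)} (f : p.obj ⟶ q.obj)
    (g : q.obj ⟶ r.obj) : homOf (S := S) (p := p) (q := r) (f ≫ g) = homOf f ≫ homOf g := rfl

lemma homOf_id {S : Set G} (p : ObjectProperty.FullSubcategory (· ∈ S)) :
    homOf (𝟙 p.obj) = 𝟙 p := rfl

noncomputable def Jmap {z w : ObjectProperty.FullSubcategory (· ∈ E.S'')} (f : z ⟶ w) :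
    Jobj E z.obj ⟶ Jobj E w.obj :=
  inv (aMor E z.obj z.property) ≫
    E.m.map (homOf (eMor E z.obj z.property ≫ homTo f ≫
      Groupoid.inv (eMor E w.obj w.property))) ≫
    aMor E w.obj w.property

lemma Jmap_id (z : ObjectProperty.FullSubcategory (· ∈ E.S'')) : Jmap E (𝟙 z) = 𝟙 (Jobj E z.obj) := by
  rw [Jmap, show homOf (eMor E z.obj z.property ≫ homTo (𝟙 z) ≫
      Groupoid.inv (eMor E z.obj z.property)) = 𝟙 (pObj E z.obj) from by
    ext
    show eMor E z.obj z.property ≫ 𝟙 z.obj ≫ Groupoid.inv (eMor E z.obj z.property) = 𝟙 _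
    simp [Groupoid.inv_eq_inv]]
  simp

lemma Jmap_comp {z w v : ObjectProperty.FullSubcategory (· ∈ E.S'')} (f : z ⟶ w) (g : w ⟶ v) :
    Jmap E (f ≫ g) = Jmap E f ≫ Jmap E g := by
  rw [Jmap, show homOf (eMor E z.obj z.property ≫ homTo (f ≫ g) ≫
      Groupoid.inv (eMor E v.obj v.property)) =
      homOf (eMor E z.obj z.property ≫ homTo f ≫ Groupoid.inv (eMor E w.obj w.property)) ≫
      homOf (eMor E w.obj w.property ≫ homTo g ≫ Groupoid.inv (eMor E v.obj v.property)) from by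
    ext
    show eMor E z.obj z.property ≫ (homTo f ≫ homTo g) ≫ Groupoid.inv (eMor E v.obj v.property) =
      (eMor E z.obj z.property ≫ homTo f ≫ Groupoid.inv (eMor E w.obj w.property)) ≫
      (eMor E w.obj w.property ≫ homTo g ≫ Groupoid.inv (eMor E v.obj v.property))
    simp [Groupoid.inv_eq_inv]]
  rw [E.m.map_comp, Jmap, Jmap]
  simp

/-- The pushout functor. -/
noncomputable def Jfun : ObjectProperty.FullSubcategory (· ∈ E.S'') ⥤ H where
  obj z := Jobj E z.obj
  map f := Jmap E f
  map_id z := Jmap_id E z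
  map_comp f g := Jmap_comp E f g

@[simp] lemma Jfun_obj (z : ObjectProperty.FullSubcategory (· ∈ E.S'')) : (Jfun E).obj z = Jobj E z.obj := rfl
@[simp] lemma Jfun_map {z w : ObjectProperty.FullSubcategory (· ∈ E.S'')} (f : z ⟶ w) :
    (Jfun E).map f = Jmap E f := rfl


lemma homOf_eqToHom {S : Set G} {p q : ObjectProperty.FullSubcategory (· ∈ S)} (h : p.obj = q.obj) :
    homOf (p := p) (q := q) (eqToHom h) = eqToHom (sub_ext h) := by
  cases p; cases q; dsimp at h; subst h; rfl

lemma homOf_conj {S : Set G} {p q r s : ObjectProperty.FullSubcategory (· ∈ S)} (h : p.obj = q.obj)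
    (f : q ⟶ r) (h' : r.obj = s.obj) :
    homOf (p := p) (q := s) (eqToHom h ≫ homTo f ≫ eqToHom h') =
      eqToHom (sub_ext h) ≫ f ≫ eqToHom (sub_ext h') := by
  cases p; cases q; cases r; cases s; dsimp at h h'; subst h; subst h'
  ext
  show 𝟙 _ ≫ homTo f ≫ 𝟙 _ = _
  simp

lemma homOf_eqToHom_comp {S : Set G} {p q r : ObjectProperty.FullSubcategory (· ∈ S)} (h : p.obj = q.obj)
    (f : q.obj ⟶ r.obj) :
    homOf (p := p) (q := r) (eqToHom h ≫ f) = eqToHom (sub_ext h) ≫ homOf f := by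
  cases p; cases q; cases r; dsimp at h; subst h
  ext
  show 𝟙 _ ≫ f = _
  simp

section UP

variable (j : ObjectProperty.FullSubcategory (· ∈ E.S'') ⥤ H)
  (h2 : inclSub E.hsub ⋙ j = E.m)
  (h3 : j.obj ⟨E.x, E.hxS''⟩ = E.n.obj (Discrete.mk false, (true : Bool)))
  (h4 : j.obj ⟨E.η.obj E.x, E.hηxS''⟩ = E.n.obj (Discrete.mk true, (true : Bool)))
  (h5 : HEq (j.map (X := ⟨E.y, E.hsub E.hy⟩) (Y := ⟨E.x, E.hxS''⟩) (homOf E.c)) (E.n.map φmor))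
  (h6 : HEq (j.map (X := ⟨E.η.obj E.y, E.hsub (E.hstab' E.y E.hy)⟩)
    (Y := ⟨E.η.obj E.x, E.hηxS''⟩) (homOf (E.η.map E.c))) (E.n.map ψmor))

include h2 h3 h4 in
lemma obj_char (z : ObjectProperty.FullSubcategory (· ∈ E.S'')) : j.obj z = Jobj E z.obj := by
  rcases tri E z.property with h | h | h
  · rw [Jobj_pos E h]
    exact Functor.congr_obj h2 ⟨z.obj, h⟩
  · obtain ⟨zo, hz⟩ := z; dsimp at h; subst h
    rw [Jobj_x]; exact h3
  · obtain ⟨zo, hz⟩ := z; dsimp at h; subst h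
    rw [Jobj_ηx]; exact h4

include h2 h3 h4 h5 h6 in
lemma map_eMor (z : ObjectProperty.FullSubcategory (· ∈ E.S'')) :
    j.map (homOf (p := (inclSub E.hsub).obj (pObj E z.obj)) (q := z)
        (eMor E z.obj z.property)) =
      eqToHom (Functor.congr_obj h2 (pObj E z.obj)) ≫ aMor E z.obj z.property ≫
        eqToHom (obj_char E j h2 h3 h4 z).symm := by
  rcases tri E z.property with h | h | h
  · erw [eMor_pos E h, homOf_eqToHom, eqToHom_map, aMor_pos E h]
    simp
  · obtain ⟨zo, hz⟩ := z; dsimp at h; subst h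
    have hc := (conj_eqToHom_iff_heq (j.map (X := ⟨E.y, E.hsub E.hy⟩)
        (Y := ⟨E.x, E.hxS''⟩) (homOf E.c)) (E.n.map φmor)
        ((obj_char E j h2 h3 h4 ⟨E.y, E.hsub E.hy⟩).trans
          ((Jobj_pos E E.hy).trans E.hagree0)) h3).mpr h5
    have hc' : j.map (X := ⟨E.y, E.hsub E.hy⟩) (Y := ⟨E.x, hz⟩) (homOf E.c) =
        eqToHom ((obj_char E j h2 h3 h4 ⟨E.y, E.hsub E.hy⟩).trans
          ((Jobj_pos E E.hy).trans E.hagree0)) ≫ E.n.map φmor ≫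
          eqToHom (show j.obj ⟨E.x, hz⟩ = E.n.obj (Discrete.mk false, (true : Bool))
            from h3).symm := hc
    erw [eMor_x E hz, aMor_x E hz, homOf_eqToHom_comp (q := ⟨E.y, E.hsub E.hy⟩),
      Functor.map_comp, eqToHom_map, hc']
    simp
  · obtain ⟨zo, hz⟩ := z; dsimp at h; subst h
    have hc := (conj_eqToHom_iff_heq (j.map (X := ⟨E.η.obj E.y, E.hsub (E.hstab' E.y E.hy)⟩)
        (Y := ⟨E.η.obj E.x, E.hηxS''⟩) (homOf (E.η.map E.c))) (E.n.map ψmor)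
        ((obj_char E j h2 h3 h4 ⟨E.η.obj E.y, E.hsub (E.hstab' E.y E.hy)⟩).trans
          ((Jobj_pos E (E.hstab' E.y E.hy)).trans E.hagree1)) h4).mpr h6
    have hc' : j.map (X := ⟨E.η.obj E.y, E.hsub (E.hstab' E.y E.hy)⟩)
        (Y := ⟨E.η.obj E.x, hz⟩) (homOf (E.η.map E.c)) =
        eqToHom ((obj_char E j h2 h3 h4 ⟨E.η.obj E.y, E.hsub (E.hstab' E.y E.hy)⟩).trans
          ((Jobj_pos E (E.hstab' E.y E.hy)).trans E.hagree1)) ≫ E.n.map ψmor ≫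
          eqToHom (show j.obj ⟨E.η.obj E.x, hz⟩ =
            E.n.obj (Discrete.mk true, (true : Bool)) from h4).symm := hc
    erw [eMor_ηx E hz, aMor_ηx E hz,
      homOf_eqToHom_comp (q := ⟨E.η.obj E.y, E.hsub (E.hstab' E.y E.hy)⟩),
      Functor.map_comp, eqToHom_map, hc']
    simp

include h2 h3 h4 h5 h6 in
lemma map_char {z w : ObjectProperty.FullSubcategory (· ∈ E.S'')} (f : z ⟶ w) :
    j.map f = eqToHom (obj_char E j h2 h3 h4 z) ≫ Jmap E f ≫
      eqToHom (obj_char E j h2 h3 h4 w).symm := by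
  have hfac : homOf (p := (inclSub E.hsub).obj (pObj E z.obj)) (q := z)
        (eMor E z.obj z.property) ≫ f =
      (inclSub E.hsub).map (homOf (eMor E z.obj z.property ≫ homTo f ≫
        Groupoid.inv (eMor E w.obj w.property))) ≫
      homOf (p := (inclSub E.hsub).obj (pObj E w.obj)) (q := w) (eMor E w.obj w.property) := by
    ext
    show eMor E z.obj z.property ≫ homTo f =
      (eMor E z.obj z.property ≫ homTo f ≫ Groupoid.inv (eMor E w.obj w.property)) ≫
        eMor E w.obj w.property
    simp [Groupoid.inv_eq_inv]
  have h2' := Functor.congr_hom h2 (homOf (eMor E z.obj z.property ≫ homTo f ≫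
    Groupoid.inv (eMor E w.obj w.property)))
  simp only [Functor.comp_map] at h2'
  have h := congrArg j.map hfac
  rw [j.map_comp, j.map_comp, h2', map_eMor E j h2 h3 h4 h5 h6 z,
    map_eMor E j h2 h3 h4 h5 h6 w] at h
  have hj : j.map f = inv (eqToHom (Functor.congr_obj h2 (pObj E z.obj)) ≫
      aMor E z.obj z.property ≫ eqToHom (obj_char E j h2 h3 h4 z).symm) ≫
      ((eqToHom (Functor.congr_obj h2 (pObj E z.obj)) ≫
        E.m.map (homOf (eMor E z.obj z.property ≫ homTo f ≫
          Groupoid.inv (eMor E w.obj w.property))) ≫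
        eqToHom (Functor.congr_obj h2 (pObj E w.obj)).symm) ≫
      (eqToHom (Functor.congr_obj h2 (pObj E w.obj)) ≫ aMor E w.obj w.property ≫
        eqToHom (obj_char E j h2 h3 h4 w).symm)) := by
    rw [← h]
    simp
  rw [hj, Jmap]
  simp

lemma groupoid_inv_eqToHom {C : Type*} [Groupoid C] {a b : C} (h : a = b) :
    Groupoid.inv (eqToHom h) = eqToHom h.symm := by
  subst h; simp [Groupoid.inv_eq_inv]

lemma inv_aMor_pos {z : G} (h : z ∈ E.S') (hz : z ∈ E.S'') :
    inv (aMor E z hz) = eqToHom (show Jobj E z = E.m.obj (pObj E z) from by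
      rw [pObj_pos E h, Jobj_pos E h]) := by
  rw [aMor_pos E h]
  simp

lemma Jobj_incl (z : ObjectProperty.FullSubcategory (· ∈ E.S')) : Jobj E z.obj = E.m.obj z := by
  rw [Jobj_pos E z.property]

lemma Jfun_cond2 : inclSub E.hsub ⋙ (Jfun E) = E.m := by
  refine CategoryTheory.Functor.ext (fun z => Jobj_incl E z) (fun X Y f => ?_)
  show Jmap E ((inclSub E.hsub).map f) = _
  rw [Jmap]
  dsimp only [inclSub]
  erw [eMor_pos E X.property, eMor_pos E Y.property, inv_aMor_pos E X.property,
    aMor_pos E Y.property, groupoid_inv_eqToHom,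
    homOf_conj (q := X) (r := Y), Functor.map_comp, Functor.map_comp,
    eqToHom_map, eqToHom_map]
  simp
  rfl

lemma Jmap_c : Jmap E (z := ⟨E.y, E.hsub E.hy⟩) (w := ⟨E.x, E.hxS''⟩) (homOf E.c) =
    eqToHom ((Jobj_pos E E.hy).trans E.hagree0) ≫ E.n.map φmor ≫
      eqToHom (Jobj_x E).symm := by
  rw [Jmap]
  dsimp only
  rw [show homOf (p := pObj E E.y) (q := pObj E E.x)
      (eMor E E.y (E.hsub E.hy) ≫ homTo (S := E.S'') (p := ⟨E.y, E.hsub E.hy⟩) (q := ⟨E.x, E.hxS''⟩) (homOf E.c) ≫ Groupoid.inv (eMor E E.x E.hxS'')) =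
      eqToHom (by rw [pObj_pos E E.hy, pObj_x]) from by
    ext
    rw [eMor_pos E E.hy, eMor_x E E.hxS'', sub_eqToHom]
    show eqToHom _ ≫ E.c ≫ Groupoid.inv (eqToHom _ ≫ E.c) = eqToHom _
    simp [Groupoid.inv_eq_inv]]
  rw [eqToHom_map, inv_aMor_pos E E.hy, aMor_x E E.hxS'']
  simp

lemma Jmap_ηc : Jmap E (z := ⟨E.η.obj E.y, E.hsub (E.hstab' E.y E.hy)⟩)
      (w := ⟨E.η.obj E.x, E.hηxS''⟩) (homOf (E.η.map E.c)) =
    eqToHom ((Jobj_pos E (E.hstab' E.y E.hy)).trans E.hagree1) ≫ E.n.map ψmor ≫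
      eqToHom (Jobj_ηx E).symm := by
  rw [Jmap]
  dsimp only
  rw [show homOf (p := pObj E (E.η.obj E.y)) (q := pObj E (E.η.obj E.x))
      (eMor E (E.η.obj E.y) (E.hsub (E.hstab' E.y E.hy)) ≫ homTo (S := E.S'') (p := ⟨E.η.obj E.y, E.hsub (E.hstab' E.y E.hy)⟩) (q := ⟨E.η.obj E.x, E.hηxS''⟩) (homOf (E.η.map E.c)) ≫
        Groupoid.inv (eMor E (E.η.obj E.x) E.hηxS'')) =
      eqToHom (by rw [pObj_pos E (E.hstab' E.y E.hy), pObj_ηx]) from by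
    ext
    rw [eMor_pos E (E.hstab' E.y E.hy), eMor_ηx E E.hηxS'', sub_eqToHom]
    show eqToHom _ ≫ E.η.map E.c ≫ Groupoid.inv (eqToHom _ ≫ E.η.map E.c) = eqToHom _
    simp [Groupoid.inv_eq_inv]]
  rw [eqToHom_map, inv_aMor_pos E (E.hstab' E.y E.hy), aMor_ηx E E.hηxS'']
  simp

lemma Jfun_cond3 : (Jfun E).obj ⟨E.x, E.hxS''⟩ = E.n.obj (Discrete.mk false, (true : Bool)) :=
  Jobj_x E

lemma Jfun_cond4 : (Jfun E).obj ⟨E.η.obj E.x, E.hηxS''⟩ =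
    E.n.obj (Discrete.mk true, (true : Bool)) := Jobj_ηx E

lemma Jfun_cond5 : HEq ((Jfun E).map (X := ⟨E.y, E.hsub E.hy⟩) (Y := ⟨E.x, E.hxS''⟩) (homOf E.c))
    (E.n.map φmor) := (conj_eqToHom_iff_heq _ _ ((Jobj_pos E E.hy).trans E.hagree0) (Jobj_x E)).mp (Jmap_c E)

lemma Jfun_cond6 : HEq ((Jfun E).map (X := ⟨E.η.obj E.y, E.hsub (E.hstab' E.y E.hy)⟩)
    (Y := ⟨E.η.obj E.x, E.hηxS''⟩) (homOf (E.η.map E.c))) (E.n.map ψmor) :=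
  (conj_eqToHom_iff_heq _ _ ((Jobj_pos E (E.hstab' E.y E.hy)).trans E.hagree1) (Jobj_ηx E)).mp (Jmap_ηc E)

include h2 h3 h4 h5 h6 in
lemma eq_Jfun : j = Jfun E :=
  CategoryTheory.Functor.ext (fun z => obj_char E j h2 h3 h4 z)
    (fun _ _ f => map_char E j h2 h3 h4 h5 h6 f)

end UP

lemma incl_restrict : inclSub E.hsub ⋙ restrictInv E.η E.S'' E.hstab'' =
    restrictInv E.η E.S' E.hstab' ⋙ inclSub E.hsub := rfl

lemma theta_nmap_psi : E.θ.map (E.n.map ψmor) =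
    eqToHom (Functor.congr_obj E.hn (Discrete.mk true, (false : Bool))).symm ≫
      E.n.map φmor ≫ eqToHom (Functor.congr_obj E.hn (Discrete.mk true, (true : Bool))) := by
  have hψ := Functor.congr_hom E.hn ψmor
  simp only [Functor.comp_map] at hψ
  rw [show swapSInt.map ψmor = φmor from Subsingleton.elim _ _] at hψ
  exact (conj_eqToHom_iff_heq _ _ (Functor.congr_obj E.hn (Discrete.mk true, (false : Bool))).symm
    (Functor.congr_obj E.hn (Discrete.mk true, (true : Bool))).symm).mpr (Functor.hcongr_hom E.hn ψmor).symm

lemma theta_nmap_phi : E.θ.map (E.n.map φmor) =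
    eqToHom (Functor.congr_obj E.hn (Discrete.mk false, (false : Bool))).symm ≫
      E.n.map ψmor ≫ eqToHom (Functor.congr_obj E.hn (Discrete.mk false, (true : Bool))) := by
  have hφ := Functor.congr_hom E.hn φmor
  simp only [Functor.comp_map] at hφ
  rw [show swapSInt.map φmor = ψmor from Subsingleton.elim _ _] at hφ
  exact (conj_eqToHom_iff_heq _ _ (Functor.congr_obj E.hn (Discrete.mk false, (false : Bool))).symm
    (Functor.congr_obj E.hn (Discrete.mk false, (true : Bool))).symm).mpr (Functor.hcongr_hom E.hn φmor).symm

lemma heq_aux {C D : Type*} [Category C] [Category D] (F : C ⥤ D) {a b c d e f : C}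
    (h1 : a = b) (h2 : b = c) (X : c ⟶ d) (h3 : d = e) (h4 : e = f) :
    HEq (F.map (eqToHom h1 ≫ (eqToHom h2 ≫ X ≫ eqToHom h3) ≫ eqToHom h4)) (F.map X) := by
  subst h1 h2 h3 h4; simp

lemma Jfun_cond1 :
    restrictInv E.η E.S'' E.hstab'' ⋙ Jfun E = Jfun E ⋙ E.θ := by
  set K := restrictInv E.η E.S'' E.hstab'' ⋙ Jfun E ⋙ E.θ with hKdef
  have k2 : inclSub E.hsub ⋙ K = E.m := by
    rw [hKdef, ← Functor.assoc, incl_restrict, Functor.assoc, ← Functor.assoc (inclSub E.hsub),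
      Jfun_cond2, ← Functor.assoc, E.hm, Functor.assoc, E.hθ, Functor.comp_id]
  have k3 : K.obj ⟨E.x, E.hxS''⟩ = E.n.obj (Discrete.mk false, (true : Bool)) := by
    show E.θ.obj (Jobj E (E.η.obj E.x)) = _
    rw [Jobj_ηx]
    exact (Functor.congr_obj E.hn (Discrete.mk true, (true : Bool))).symm
  have k4 : K.obj ⟨E.η.obj E.x, E.hηxS''⟩ = E.n.obj (Discrete.mk true, (true : Bool)) := by
    show E.θ.obj (Jobj E (E.η.obj (E.η.obj E.x))) = _
    rw [ηη E E.x, Jobj_x]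
    exact (Functor.congr_obj E.hn (Discrete.mk false, (true : Bool))).symm
  have k5 : HEq (K.map (X := ⟨E.y, E.hsub E.hy⟩) (Y := ⟨E.x, E.hxS''⟩) (homOf E.c))
      (E.n.map φmor) := by
    refine (conj_eqToHom_iff_heq _ _
      ((obj_char E K k2 k3 k4 ⟨E.y, E.hsub E.hy⟩).trans ((Jobj_pos E E.hy).trans E.hagree0))
      k3).mp ?_
    show E.θ.map (Jmap E (z := ⟨E.η.obj E.y, E.hsub (E.hstab' E.y E.hy)⟩)
      (w := ⟨E.η.obj E.x, E.hηxS''⟩) (homOf (E.η.map E.c))) = _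
    rw [Jmap_ηc E, Functor.map_comp, Functor.map_comp, eqToHom_map, eqToHom_map,
      theta_nmap_psi]
    simp
    erw [eqToHom_trans]
    rfl
  have k6 : HEq (K.map (X := ⟨E.η.obj E.y, E.hsub (E.hstab' E.y E.hy)⟩)
      (Y := ⟨E.η.obj E.x, E.hηxS''⟩) (homOf (E.η.map E.c))) (E.n.map ψmor) := by
    refine (conj_eqToHom_iff_heq _ _
      ((obj_char E K k2 k3 k4 ⟨E.η.obj E.y, E.hsub (E.hstab' E.y E.hy)⟩).trans
        ((Jobj_pos E (E.hstab' E.y E.hy)).trans E.hagree1))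
      k4).mp ?_
    show E.θ.map (Jmap E
      (z := ⟨E.η.obj (E.η.obj E.y), E.hsub (E.hstab' _ (E.hstab' E.y E.hy))⟩)
      (w := ⟨E.η.obj (E.η.obj E.x), E.hstab'' _ E.hηxS''⟩)
      (homOf (E.η.map (E.η.map E.c)))) = _
    rw [show homOf (p := ⟨E.η.obj (E.η.obj E.y), E.hsub (E.hstab' _ (E.hstab' E.y E.hy))⟩)
        (q := ⟨E.η.obj (E.η.obj E.x), E.hstab'' _ E.hηxS''⟩) (E.η.map (E.η.map E.c)) =
        homOf (eqToHom (ηη E E.y) ≫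
          homTo (S := E.S'') (p := ⟨E.y, E.hsub E.hy⟩) (q := ⟨E.x, E.hxS''⟩) (homOf E.c) ≫
          eqToHom (ηη E E.x).symm) from congrArg _ (ηηmap E E.c)]
    rw [homOf_conj (q := ⟨E.y, E.hsub E.hy⟩) (r := ⟨E.x, E.hxS''⟩), ← Jfun_map E]
    simp only [Functor.map_comp, eqToHom_map]
    rw [Jfun_map, Jmap_c E]
    refine (conj_eqToHom_iff_heq' _ _ _ _).mpr ?_
    refine HEq.trans (heq_aux E.θ _ _ _ _ _) ?_
    exact (conj_eqToHom_iff_heq' _ _ _ _).mp (theta_nmap_phi E)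
  have hK : K = Jfun E := eq_Jfun E K k2 k3 k4 k5 k6
  calc restrictInv E.η E.S'' E.hstab'' ⋙ Jfun E
      = restrictInv E.η E.S'' E.hstab'' ⋙ Jfun E ⋙ (E.θ ⋙ E.θ) := by
        rw [E.hθ, Functor.comp_id]
    _ = K ⋙ E.θ := rfl
    _ = Jfun E ⋙ E.θ := by rw [hK]

end PWCE

/-- Lemma: `G''` is the pushout of `G' ← S(𝟙) ↪ S(I)` in groupoids with
involution. Let `(G, η)` be a groupoid with involution, `G' ⊆ G''` full
subgroupoids stable under `η` with `Ob G'' = Ob G' ∪ {x, η x}`, `η x ≠ x`,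
`x ∉ G'`, and let `y ∈ G'` and `c : y ⟶ x` be an isomorphism. Then for any
groupoid with involution `(H, θ)`, equivariant `m : G' ⥤ H` and equivariant
`n : S(I) ⥤ H` agreeing on `S(𝟙)` (i.e. `m y = n 0` and `m (η y) = n 1`), there
is a unique equivariant `j : G'' ⥤ H` restricting to `m` on `G'` and to `n` on
`S(I)` (via `0 ↦ y, 1 ↦ η y, 0' ↦ x, 1' ↦ η x, φ ↦ c, ψ ↦ η c`). -/
theorem pushout_of_weakly_connected_extension
    (η : G ⥤ G) (hη : η ⋙ η = 𝟭 G)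
    (S' S'' : Set G)
    (hstab' : ∀ z ∈ S', η.obj z ∈ S') (hstab'' : ∀ z ∈ S'', η.obj z ∈ S'')
    (hsub : S' ⊆ S'')
    (x : G) (hxfix : η.obj x ≠ x) (hxnot : x ∉ S')
    (hS'' : S'' = S' ∪ {x, η.obj x})
    (hxS'' : x ∈ S'') (hηxS'' : η.obj x ∈ S'')
    (y : G) (hy : y ∈ S') (c : y ⟶ x)
    {H : Type u₂} [Groupoid H] (θ : H ⥤ H) (hθ : θ ⋙ θ = 𝟭 H)
    (m : ObjectProperty.FullSubcategory (· ∈ S') ⥤ H)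
    (hm : restrictInv η S' hstab' ⋙ m = m ⋙ θ)
    (n : SInt ⥤ H)
    (hn : swapSInt ⋙ n = n ⋙ θ)
    (hagree0 : m.obj ⟨y, hy⟩ = n.obj (Discrete.mk false, (false : Bool)))
    (hagree1 : m.obj ⟨η.obj y, hstab' y hy⟩ = n.obj (Discrete.mk true, (false : Bool))) :
    ∃! j : ObjectProperty.FullSubcategory (· ∈ S'') ⥤ H,
      (restrictInv η S'' hstab'' ⋙ j = j ⋙ θ) ∧
      (inclSub hsub ⋙ j = m) ∧
      j.obj ⟨x, hxS''⟩ = n.obj (Discrete.mk false, (true : Bool)) ∧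
      j.obj ⟨η.obj x, hηxS''⟩ = n.obj (Discrete.mk true, (true : Bool)) ∧
      HEq (j.map (X := ⟨y, hsub hy⟩) (Y := ⟨x, hxS''⟩) (ObjectProperty.homMk c))
        (n.map (X := (Discrete.mk false, (false : Bool))) (Y := (Discrete.mk false, (true : Bool)))
          (𝟙 (Discrete.mk false), PUnit.unit)) ∧
      HEq (j.map (X := ⟨η.obj y, hsub (hstab' y hy)⟩) (Y := ⟨η.obj x, hηxS''⟩) (ObjectProperty.homMk (η.map c)))
        (n.map (X := (Discrete.mk true, (false : Bool))) (Y := (Discrete.mk true, (true : Bool)))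
          (𝟙 (Discrete.mk true), PUnit.unit)) := by
  let E : PWCE.Setup G H := ⟨η, hη, S', S'', hstab', hstab'', hsub, x, hxfix, hxnot, hS'',
    hxS'', hηxS'', y, hy, c, θ, hθ, m, hm, n, hn, hagree0, hagree1⟩
  refine ⟨PWCE.Jfun E,
    ⟨PWCE.Jfun_cond1 E, PWCE.Jfun_cond2 E, PWCE.Jfun_cond3 E, PWCE.Jfun_cond4 E,
      PWCE.Jfun_cond5 E, PWCE.Jfun_cond6 E⟩, ?_⟩
  rintro j ⟨-, hj2, hj3, hj4, hj5, hj6⟩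
  exact PWCE.eq_Jfun E j hj2 hj3 hj4 hj5 hj6
end
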